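/- Under the hypotheses of the pullback Cauchy lemma, the function γ(ω) := lim_{n→∞} g^n(σ^{-n}ω, 0) is defined for ν-a.e. ω and its graph is invariant: g_ω(γ(ω)) = γ(σω) for ν-a.e. ω. -/

import Mathlib

/-! Since `h_{n+1}(ω, x) = g^n(σ⁻ⁿω, g(σ⁻⁽ⁿ⁺¹⁾ω, x))` and `h_n(ω, x) = g^n(σ⁻ⁿω, x)`,
consecutive terms differ by at most `Lip(g^n(σ⁻ⁿω, ·)) · |x - g(σ⁻⁽ⁿ⁺¹⁾ω, x)| ≤ C(ω) e^{λn} M`,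
so the sequence is Cauchy. The relation `h_{n+1}(σω, x) = g_ω(h_n(ω, x))` passes to the limit
by continuity of `g_ω`, and it does so almost everywhere because `σ` is non-singular. -/

open Set Filter Topology MeasureTheory

/-- Lipschitz seminorm of a map, computed over the unit interval `I = [0,1]`. -/
noncomputable def lipSemi (f : ℝ → ℝ) : ℝ :=
  sSup {r : ℝ | ∃ x ∈ Icc (0:ℝ) 1, ∃ y ∈ Icc (0:ℝ) 1, x ≠ y ∧ r = |f x - f y| / |x - y|}

/-- Fiber compositions `g^n(ω, x) = g_{σ^{n−1}ω}(⋯ g_ω(x)⋯)` of a skew product over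
an (abstract) base transformation `σ`. -/
def gIter {S : Type*} (σ : S → S) (g : S → ℝ → ℝ) : ℕ → S → ℝ → ℝ
  | 0, _, x => x
  | n + 1, ω, x => gIter σ g n (σ ω) (g ω x)

section lipSemi

variable {f : ℝ → ℝ} {L : NNReal}

theorem abs_sub_div_abs_sub_le_of_lipschitzOnWith {s : Set ℝ} (hf : LipschitzOnWith L f s)
    {x y : ℝ} (hx : x ∈ s) (hy : y ∈ s) (hxy : x ≠ y) :
    |f x - f y| / |x - y| ≤ L := by
  rw [div_le_iff₀ (abs_pos.2 (sub_ne_zero.2 hxy))]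
  simpa [Real.dist_eq] using hf.dist_le_mul x hx y hy

theorem lipSemi_le_of_lipschitzOnWith (hf : LipschitzOnWith L f (Icc 0 1)) :
    lipSemi f ≤ L := by
  refine Real.sSup_le ?_ L.coe_nonneg
  rintro r ⟨x, hx, y, hy, hxy, rfl⟩
  exact abs_sub_div_abs_sub_le_of_lipschitzOnWith hf hx hy hxy

theorem lipSemi_nonneg (f : ℝ → ℝ) : 0 ≤ lipSemi f :=
  Real.sSup_nonneg <| by
    rintro r ⟨x, -, y, -, -, rfl⟩
    positivity

theorem abs_sub_le_lipSemi_mul (hf : LipschitzOnWith L f (Icc 0 1)) {x y : ℝ}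
    (hx : x ∈ Icc (0:ℝ) 1) (hy : y ∈ Icc (0:ℝ) 1) :
    |f x - f y| ≤ lipSemi f * |x - y| := by
  rcases eq_or_ne x y with rfl | hxy
  · simp
  have hbdd : BddAbove {r : ℝ | ∃ x ∈ Icc (0:ℝ) 1, ∃ y ∈ Icc (0:ℝ) 1,
      x ≠ y ∧ r = |f x - f y| / |x - y|} := by
    refine ⟨L, ?_⟩
    rintro r ⟨a, ha, b, hb, hab, rfl⟩
    exact abs_sub_div_abs_sub_le_of_lipschitzOnWith hf ha hb hab
  have hquot : |f x - f y| / |x - y| ≤ lipSemi f := le_csSup hbdd ⟨x, hx, y, hy, hxy, rfl⟩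
  rwa [div_le_iff₀ (abs_pos.2 (sub_ne_zero.2 hxy))] at hquot

end lipSemi

section gIter

variable {S : Type*} (σ : S → S) (g : S → ℝ → ℝ)

theorem gIter_succ_apply' (n : ℕ) (ω : S) (x : ℝ) :
    gIter σ g (n + 1) ω x = g (σ^[n] ω) (gIter σ g n ω x) := by
  induction n generalizing ω x with
  | zero => rfl
  | succ n ih =>
    change gIter σ g (n + 1) (σ ω) (g ω x) = _
    rw [ih, ← Function.iterate_succ_apply]
    rfl

variable {σ g}

theorem exists_lipschitzOnWith_gIter
    (hLip : ∀ ω, ∃ L : NNReal, LipschitzOnWith L (g ω) (Icc 0 1))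
    (hmaps : ∀ ω, MapsTo (g ω) (Icc 0 1) (Icc 0 1)) (n : ℕ) (ω : S) :
    ∃ L : NNReal, LipschitzOnWith L (gIter σ g n ω) (Icc 0 1) := by
  induction n generalizing ω with
  | zero => exact ⟨1, LipschitzWith.id.lipschitzOnWith⟩
  | succ n ih =>
    obtain ⟨L₁, h₁⟩ := ih (σ ω)
    obtain ⟨L₂, h₂⟩ := hLip ω
    exact ⟨L₁ * L₂, h₁.comp h₂ (hmaps ω)⟩

end gIter

section pullback

variable {S : Type*} (σ : S ≃ S) (g : S → ℝ → ℝ)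

def pullbackIter (n : ℕ) (ω : S) (x : ℝ) : ℝ :=
  gIter σ g n (σ.symm^[n] ω) x

theorem pullbackIter_succ (n : ℕ) (ω : S) (x : ℝ) :
    pullbackIter σ g (n + 1) ω x =
      gIter σ g n (σ.symm^[n] ω) (g (σ.symm^[n + 1] ω) x) := by
  change gIter σ g n (σ (σ.symm^[n + 1] ω)) _ = _
  rw [Function.iterate_succ_apply' σ.symm, σ.apply_symm_apply]

theorem pullbackIter_succ_apply (n : ℕ) (ω : S) (x : ℝ) :
    pullbackIter σ g (n + 1) (σ ω) x = g ω (pullbackIter σ g n ω x) := by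
  have hsymm : σ.symm^[n + 1] (σ ω) = σ.symm^[n] ω := by
    rw [Function.iterate_succ_apply, σ.symm_apply_apply]
  rw [pullbackIter, hsymm, gIter_succ_apply',
    (Function.LeftInverse.iterate σ.apply_symm_apply n) ω, pullbackIter]

variable {σ g}

theorem dist_pullbackIter_succ_le
    (hLip : ∀ ω, ∃ L : NNReal, LipschitzOnWith L (g ω) (Icc 0 1))
    (hmaps : ∀ ω, MapsTo (g ω) (Icc 0 1) (Icc 0 1))
    {M : ℝ} (hM : ∀ ω, ∀ x ∈ Icc (0:ℝ) 1, |x - g ω x| ≤ M)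
    (n : ℕ) (ω : S) {x : ℝ} (hx : x ∈ Icc (0:ℝ) 1) :
    dist (pullbackIter σ g n ω x) (pullbackIter σ g (n + 1) ω x) ≤
      lipSemi (gIter σ g n (σ.symm^[n] ω)) * M := by
  obtain ⟨L, hL⟩ := exists_lipschitzOnWith_gIter hLip hmaps n (σ.symm^[n] ω)
  rw [Real.dist_eq, pullbackIter_succ, pullbackIter]
  exact (abs_sub_le_lipSemi_mul hL hx (hmaps _ hx)).trans
    (mul_le_mul_of_nonneg_left (hM _ x hx) (lipSemi_nonneg _))

theorem cauchySeq_pullbackIter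
    (hLip : ∀ ω, ∃ L : NNReal, LipschitzOnWith L (g ω) (Icc 0 1))
    (hmaps : ∀ ω, MapsTo (g ω) (Icc 0 1) (Icc 0 1))
    {M : ℝ} (hM : ∀ ω, ∀ x ∈ Icc (0:ℝ) 1, |x - g ω x| ≤ M)
    {lam : ℝ} (hlam : lam < 0) {ω : S} {C : ℝ}
    (hdecay : ∀ n : ℕ, 1 ≤ n → lipSemi (gIter σ g n (σ.symm^[n] ω)) ≤ C * Real.exp (lam * n))
    {x : ℝ} (hx : x ∈ Icc (0:ℝ) 1) :
    CauchySeq (fun n => pullbackIter σ g n ω x) := by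
  have hM0 : 0 ≤ M := (abs_nonneg _).trans (hM ω x hx)
  have hlip : ∀ n : ℕ, lipSemi (gIter σ g n (σ.symm^[n] ω)) ≤ max 1 C * Real.exp lam ^ n := by
    rintro (_ | n)
    -- `n = 0` is not covered by `hdecay`: there `gIter` is the identity, with `lipSemi ≤ 1`.
    · exact (lipSemi_le_of_lipschitzOnWith (L := 1) LipschitzWith.id.lipschitzOnWith).trans
        (by simp)
    · calc lipSemi (gIter σ g (n + 1) (σ.symm^[n + 1] ω))
          ≤ C * Real.exp (lam * (n + 1 : ℕ)) := hdecay (n + 1) n.succ_pos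
        _ ≤ max 1 C * Real.exp lam ^ (n + 1) := by
          rw [mul_comm lam, Real.exp_nat_mul]
          gcongr
          exact le_max_right _ _
  refine cauchySeq_of_le_geometric _ (max 1 C * M) (Real.exp_lt_one_iff.2 hlam) fun n => ?_
  calc dist (pullbackIter σ g n ω x) (pullbackIter σ g (n + 1) ω x)
      ≤ lipSemi (gIter σ g n (σ.symm^[n] ω)) * M := dist_pullbackIter_succ_le hLip hmaps hM n ω hx
    _ ≤ max 1 C * Real.exp lam ^ n * M := mul_le_mul_of_nonneg_right (hlip n) hM0
    _ = max 1 C * M * Real.exp lam ^ n := by ring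

end pullback

theorem ae_apply_limit_eq_limit_comp {S X : Type*} [MeasurableSpace S] [TopologicalSpace X]
    [T2Space X] {μ : Measure S} {σ : S → S} (hσ : Measure.QuasiMeasurePreserving σ μ μ)
    {f : S → X → X} (hf : ∀ ω, Continuous (f ω)) {u : ℕ → S → X}
    (hu : ∀ n ω, u (n + 1) (σ ω) = f ω (u n ω)) {γ : S → X}
    (hγ : ∀ᵐ ω ∂μ, Tendsto (fun n => u n ω) atTop (𝓝 (γ ω))) :
    ∀ᵐ ω ∂μ, f ω (γ ω) = γ (σ ω) := by
  filter_upwards [hγ, hσ.tendsto_ae.eventually hγ] with ω hω hσω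
  have hshift : Tendsto (fun n => u (n + 1) (σ ω)) atTop (𝓝 (γ (σ ω))) :=
    hσω.comp (tendsto_add_atTop_nat 1)
  simp only [hu] at hshift
  exact tendsto_nhds_unique (((hf ω).tendsto _).comp hω) hshift

theorem pullback_limit_invariant_graph_general
    {S : Type*} [MeasurableSpace S] (ν : Measure S)
    (σ : S ≃ S) (hσ : MeasurePreserving σ ν ν)
    (g : S → ℝ → ℝ)
    (hcont : ∀ ω, Continuous (g ω))
    (hLip : ∀ ω, ∃ L : NNReal, LipschitzOnWith L (g ω) (Icc (0:ℝ) 1))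
    (hmaps : ∀ ω, MapsTo (g ω) (Icc (0:ℝ) 1) (Icc (0:ℝ) 1))
    (lam : ℝ) (hlam : lam < 0) (C : S → ℝ)
    (hdecay : ∀ᵐ ω ∂ν, ∀ n : ℕ, 1 ≤ n →
      lipSemi (gIter σ g n (σ.symm^[n] ω)) ≤ C ω * Real.exp (lam * n))
    (hbdd : ∃ M : ℝ, ∀ ω, ∀ x ∈ Icc (0:ℝ) 1, |x - g ω x| ≤ M) :
    ∃ γ : S → ℝ, ∀ᵐ ω ∂ν,
      Tendsto (fun n : ℕ => gIter σ g n (σ.symm^[n] ω) 0) atTop (𝓝 (γ ω)) ∧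
      g ω (γ ω) = γ (σ ω) := by
  obtain ⟨M, hM⟩ := hbdd
  let h : ℕ → S → ℝ := fun n ω => pullbackIter σ g n ω 0
  have hconv : ∀ᵐ ω ∂ν, Tendsto (fun n => h n ω) atTop (𝓝 (limUnder atTop (fun n => h n ω))) := by
    filter_upwards [hdecay] with ω hω
    exact (cauchySeq_pullbackIter hLip hmaps hM hlam hω ⟨le_rfl, zero_le_one⟩).tendsto_limUnder
  have hinv := ae_apply_limit_eq_limit_comp hσ.quasiMeasurePreserving hcont
    (fun n ω => pullbackIter_succ_apply σ g n ω 0) hconv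
  refine ⟨fun ω => limUnder atTop (fun n => h n ω), ?_⟩
  filter_upwards [hconv, hinv] with ω hω hωinv
  exact ⟨hω, hωinv⟩

/-- Under the hypotheses of the pullback Cauchy lemma (with continuous fiber maps),
the limit `γ(ω) = lim_n g^n(σ^{-n}ω, 0)` exists for a.e. `ω` and its graph is
invariant: `g_ω(γ(ω)) = γ(σω)` for a.e. `ω`. -/
theorem pullback_limit_invariant_graph
    {S : Type*} [MeasurableSpace S] (ν : Measure S) [IsProbabilityMeasure ν]
    (σ : S ≃ S) (hσ : MeasurePreserving σ ν ν) (hσinv : MeasurePreserving σ.symm ν ν)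
    (herg : Ergodic σ ν)
    (g : S → ℝ → ℝ)
    (hcont : ∀ ω, Continuous (g ω))
    (hLip : ∀ ω, ∃ L : NNReal, LipschitzOnWith L (g ω) (Icc (0:ℝ) 1))
    (hmaps : ∀ ω, MapsTo (g ω) (Icc (0:ℝ) 1) (Icc (0:ℝ) 1))
    (lam : ℝ) (hlam : lam < 0) (C : S → ℝ) (hCmeas : Measurable C) (hCpos : ∀ ω, 0 < C ω)
    (hdecay : ∀ᵐ ω ∂ν, ∀ n : ℕ, 1 ≤ n →
      lipSemi (gIter σ g n (σ.symm^[n] ω)) ≤ C ω * Real.exp (lam * n))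
    (hbdd : ∃ M : ℝ, ∀ ω, ∀ x ∈ Icc (0:ℝ) 1, |x - g ω x| ≤ M) :
    ∃ γ : S → ℝ, ∀ᵐ ω ∂ν,
      Tendsto (fun n : ℕ => gIter σ g n (σ.symm^[n] ω) 0) atTop (𝓝 (γ ω)) ∧
      g ω (γ ω) = γ (σ ω) :=
  pullback_limit_invariant_graph_general ν σ hσ g hcont hLip hmaps lam hlam C hdecay hbdd
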